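/- Let P be the uniform probability measure on the horizontal diameter {(x,0) : −1 ≤ x ≤ 1} of the unit circle in ℝ², and let the constraint be the unit circle. Then the set {(−1,0), (1,0)} is an optimal set of two points, and the second constrained quantization error is V_2 = 1/3. -/

import Mathlib

open MeasureTheory Real Set

noncomputable section

abbrev E2 : Type := EuclideanSpace ℝ (Fin 2)

/-- The point `(x, y)` of the Euclidean plane. -/
def cpt (x y : ℝ) : E2 := WithLp.toLp 2 ![x, y]

/-- Distortion error of `P` with respect to the set `α`: `∫ min_{a ∈ α} ‖x - a‖² dP(x)`. -/
def cDistortion (P : Measure E2) (α : Set E2) : ℝ :=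
  ∫ x, (⨅ a : α, dist x (a : E2) ^ 2) ∂P

/-- The `n`th constrained quantization error of `P` with constraint set `S`. -/
def cqError (P : Measure E2) (S : Set E2) (n : ℕ) : ℝ :=
  sInf {v : ℝ | ∃ α : Set E2, α ⊆ S ∧ α.Finite ∧ 1 ≤ α.ncard ∧ α.ncard ≤ n ∧
    v = cDistortion P α}

/-- `α` is an optimal set of `n` points for `P` with constraint `S`: it is an admissible set
attaining the `n`th constrained quantization error. -/
def IsOptimalNSet (P : Measure E2) (S : Set E2) (n : ℕ) (α : Set E2) : Prop :=
  α ⊆ S ∧ α.Finite ∧ 1 ≤ α.ncard ∧ α.ncard ≤ n ∧ cDistortion P α = cqError P S n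

/-- The uniform probability distribution on the interval `[a, b]`. -/
def uniformIccM (a b : ℝ) : Measure ℝ :=
  (ENNReal.ofReal (b - a))⁻¹ • volume.restrict (Icc a b)

/-- The point of the line `y = m x + c` with abscissa `t`. -/
def segPt (m c t : ℝ) : E2 := cpt t (m * t + c)

/-! For `a` on the unit circle the reverse triangle inequality gives `‖(x, 0) - a‖ ≥ 1 - |x|`, so
every admissible set has distortion at least `½ ∫₋₁¹ (1 - |x|)² dx = 1/3`. The pair `(±1, 0)`
attains this bound pointwise: the nearer of its two points is at distance exactly `1 - |x|`. -/

lemma cpt_zero_zero : cpt 0 0 = 0 := by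
  ext i; fin_cases i <;> simp [cpt]

lemma isometry_cpt_zero : Isometry fun x : ℝ => cpt x 0 := by
  refine Isometry.of_dist_eq fun x y => ?_
  rw [EuclideanSpace.dist_eq, Fin.sum_univ_two]
  simp [cpt, Real.dist_eq, sq_abs, Real.sqrt_sq_eq_abs]

lemma norm_cpt_zero (x : ℝ) : ‖cpt x 0‖ = |x| := by
  rw [← dist_zero_right, ← cpt_zero_zero, isometry_cpt_zero.dist_eq, Real.dist_eq, sub_zero]

lemma continuous_ciInf_of_finite {ι X : Type*} [TopologicalSpace X] [Finite ι]
    {f : ι → X → ℝ} (hf : ∀ i, Continuous (f i)) : Continuous fun x => ⨅ i, f i x := by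
  cases isEmpty_or_nonempty ι
  · simpa only [Real.iInf_of_isEmpty] using continuous_const
  · have := Fintype.ofFinite ι
    simp only [← Finset.inf'_univ_eq_ciInf]
    exact Continuous.finset_inf'_apply _ fun i _ => hf i

lemma ciInf_pair {ι β : Type*} [ConditionallyCompleteLinearOrder β] (f : ι → β) (p q : ι) :
    ⨅ a : ({p, q} : Set ι), f a = min (f p) (f q) := by
  rw [iInf, ← image_eq_range, image_pair, csInf_pair]

lemma sq_sub_norm_le_dist_sq_of_mem_sphere {X : Type*} [SeminormedAddCommGroup X] {r : ℝ}
    {a : X} (ha : a ∈ Metric.sphere 0 r) (y : X) : (r - ‖y‖) ^ 2 ≤ dist y a ^ 2 := by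
  rw [mem_sphere_zero_iff_norm] at ha
  rw [← sq_abs, ← ha, dist_comm, dist_eq_norm]
  exact pow_le_pow_left₀ (abs_nonneg _) (abs_norm_sub_norm_le a y) 2

lemma integral_uniformIccM {a b : ℝ} (hab : a ≤ b) (f : ℝ → ℝ) :
    ∫ x, f x ∂uniformIccM a b = (b - a)⁻¹ * ∫ x in a..b, f x := by
  rw [uniformIccM, integral_smul_measure, integral_Icc_eq_integral_Ioc,
    ← intervalIntegral.integral_of_le hab, ENNReal.toReal_inv, ENNReal.toReal_ofReal (by linarith),
    smul_eq_mul]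

lemma Continuous.integrable_uniformIccM {f : ℝ → ℝ} (hf : Continuous f) {a b : ℝ} (hab : a < b) :
    Integrable f (uniformIccM a b) :=
  hf.integrableOn_Icc.smul_measure (ENNReal.inv_ne_top.mpr (by simpa using hab))

lemma integral_sq_one_sub_abs : ∫ x in (-1 : ℝ)..1, (1 - |x|) ^ 2 = 2 / 3 := by
  have hint (a b : ℝ) : IntervalIntegrable (fun x : ℝ => (1 - |x|) ^ 2) volume a b :=
    (by fun_prop : Continuous fun x : ℝ => (1 - |x|) ^ 2).intervalIntegrable a b
  have hneg : ∫ x in (-1 : ℝ)..0, (1 - |x|) ^ 2 = ∫ x in (0 : ℝ)..1, (1 - |x|) ^ 2 := by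
    simpa using intervalIntegral.integral_comp_neg (a := -1) (b := 0)
      fun x : ℝ => (1 - |x|) ^ 2
  have hpos : ∫ x in (0 : ℝ)..1, (1 - |x|) ^ 2 = 1 / 3 := by
    rw [intervalIntegral.integral_congr (g := fun x => (x - 1) ^ 2) fun x hx => by
      rw [uIcc_of_le zero_le_one] at hx
      simp only [abs_of_nonneg hx.1]; ring]
    norm_num [intervalIntegral.integral_comp_sub_right (fun x => x ^ 2)]
  rw [← intervalIntegral.integral_add_adjacent_intervals (hint _ _) (hint _ _), hneg, hpos]
  norm_num

lemma integral_sq_one_sub_abs_uniformIccM : ∫ x, (1 - |x|) ^ 2 ∂uniformIccM (-1) 1 = 1 / 3 := by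
  rw [integral_uniformIccM (by norm_num), integral_sq_one_sub_abs]
  norm_num

lemma continuous_iInf_dist_sq {α : Set E2} (hα : α.Finite) :
    Continuous fun y : E2 => ⨅ a : α, dist y a ^ 2 :=
  have := hα.to_subtype
  continuous_ciInf_of_finite fun _ => by fun_prop

lemma cDistortion_map {Ω : Type*} [MeasurableSpace Ω] {μ : Measure Ω} {f : Ω → E2}
    (hf : AEMeasurable f μ) {α : Set E2} (hα : α.Finite) :
    cDistortion (μ.map f) α = ∫ x, ⨅ a : α, dist (f x) a ^ 2 ∂μ :=
  integral_map hf (continuous_iInf_dist_sq hα).aestronglyMeasurable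

lemma isOptimalNSet_of_forall_le {P : Measure E2} {S α : Set E2} {n : ℕ} (hαS : α ⊆ S)
    (hα : α.Finite) (hα₁ : 1 ≤ α.ncard) (hαn : α.ncard ≤ n)
    (hmin : ∀ β ⊆ S, β.Finite → 1 ≤ β.ncard → β.ncard ≤ n → cDistortion P α ≤ cDistortion P β) :
    IsOptimalNSet P S n α ∧ cqError P S n = cDistortion P α := by
  have hmem : cDistortion P α ∈ {v : ℝ | ∃ β : Set E2, β ⊆ S ∧ β.Finite ∧ 1 ≤ β.ncard ∧
      β.ncard ≤ n ∧ v = cDistortion P β} := ⟨α, hαS, hα, hα₁, hαn, rfl⟩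
  have hq : cqError P S n = cDistortion P α := by
    refine le_antisymm (csInf_le ⟨cDistortion P α, ?_⟩ hmem) (le_csInf ⟨_, hmem⟩ ?_) <;>
      rintro _ ⟨β, hβS, hβ, hβ₁, hβn, rfl⟩ <;> exact hmin β hβS hβ hβ₁ hβn
  exact ⟨⟨hαS, hα, hα₁, hαn, hq.symm⟩, hq⟩

section DiameterOfCircle

local notation "P" => Measure.map (fun x : ℝ => cpt x 0) (uniformIccM (-1) 1)

lemma pair_subset_sphere : ({cpt (-1) 0, cpt 1 0} : Set E2) ⊆ Metric.sphere 0 1 := by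
  rintro a (rfl | rfl) <;> simp [norm_cpt_zero]

lemma one_third_le_cDistortion {α : Set E2} (hαS : α ⊆ Metric.sphere 0 1) (hα : α.Finite)
    (hne : α.Nonempty) : 1 / 3 ≤ cDistortion P α := by
  have := hne.to_subtype
  rw [cDistortion_map isometry_cpt_zero.continuous.aemeasurable hα,
    ← integral_sq_one_sub_abs_uniformIccM]
  refine integral_mono ((by fun_prop : Continuous _).integrable_uniformIccM (by norm_num))
    (((continuous_iInf_dist_sq hα).comp isometry_cpt_zero.continuous).integrable_uniformIccM
      (by norm_num)) fun x => le_ciInf fun a => ?_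
  simpa only [norm_cpt_zero] using sq_sub_norm_le_dist_sq_of_mem_sphere (hαS a.2) (cpt x 0)

lemma cDistortion_pair : cDistortion P {cpt (-1) 0, cpt 1 0} = 1 / 3 := by
  rw [cDistortion_map isometry_cpt_zero.continuous.aemeasurable (toFinite _),
    ← integral_sq_one_sub_abs_uniformIccM]
  refine integral_congr_ae (ae_of_all _ fun x => ?_)
  simp only [ciInf_pair (fun a => dist (cpt x 0) a ^ 2), isometry_cpt_zero.dist_eq, Real.dist_eq,
    sq_abs]
  rcases le_total 0 x with hx | hx
  · rw [abs_of_nonneg hx, min_eq_right (by nlinarith)]; ring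
  · rw [abs_of_nonpos hx, min_eq_left (by nlinarith)]; ring

end DiameterOfCircle

/-- For the uniform distribution on the horizontal diameter `{(x,0) : -1 ≤ x ≤ 1}` of the unit
circle, with constraint the unit circle: `{(-1,0), (1,0)}` is an optimal set of two points, and
the second constrained quantization error is `V₂ = 1/3`. -/
theorem diameter_circle_constraint_two_points :
    IsOptimalNSet (Measure.map (fun x : ℝ => cpt x 0) (uniformIccM (-1) 1))
      (Metric.sphere (0 : E2) 1) 2 {cpt (-1) 0, cpt 1 0} ∧
    cqError (Measure.map (fun x : ℝ => cpt x 0) (uniformIccM (-1) 1))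
      (Metric.sphere (0 : E2) 1) 2 = 1 / 3 := by
  have hcard : ({cpt (-1) 0, cpt 1 0} : Set E2).ncard = 2 :=
    ncard_pair (isometry_cpt_zero.injective.ne (by norm_num))
  obtain ⟨hopt, hq⟩ := isOptimalNSet_of_forall_le pair_subset_sphere (toFinite _) (by omega)
    hcard.le fun β hβS hβ hβ₁ _ =>
      cDistortion_pair.trans_le (one_third_le_cDistortion hβS hβ ((ncard_pos hβ).mp hβ₁))
  exact ⟨hopt, hq.trans cDistortion_pair⟩
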